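/- Let X⁽²⁾ = a ∂_λ + a'λ_ε ∂_{λ_ε} + (a''λ_ε² + a'λ_εε) ∂_{λ_εε} be the second prolongation of X = a∂_λ, and let E₋₁ = λ_ε ∂_λ + λ_εε ∂_{λ_ε} + ((3/2)λ_εε²/λ_ε − R(λ)λ_ε³)∂_{λ_εε}, E₀ = λ_ε ∂_{λ_ε} + 2λ_εε ∂_{λ_εε}, E₁ = 2λ_ε ∂_{λ_εε}. Then [E₋₁, X⁽²⁾] = (a''' + 2R a' + R' a)·λ_ε³ ∂_{λ_εε}, and [E₀, X⁽²⁾] = [E₁, X⁽²⁾] = 0. In particular X⁽²⁾ commutes with E₋₁, E₀, E₁ if and only if a''' + 2R a' + R' a = 0. -/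

import Mathlib

/-!
All brackets come from explicit Fréchet derivatives. `E₀` and `E₁` are linear, so they are
their own derivatives; `X⁽²⁾` and `E₋₁` are assembled from the coordinates by sums, products,
composition with `a, a', a'', R` and, for `E₋₁`, inversion of `λ_ε`. At the point `(l, 1, 0)`
the formula for `[E₋₁, X⁽²⁾]` isolates the coefficient `a''' + 2Ra' + R'a`.
-/

/-- `E₋₁ = λ_ε ∂_λ + λ_εε ∂_{λ_ε} + ((3/2)λ_εε²/λ_ε − R(λ)λ_ε³)∂_{λ_εε}`. -/
noncomputable def Em1 (R : ℂ → ℂ) (p : ℂ × ℂ × ℂ) : ℂ × ℂ × ℂ :=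
  (p.2.1, p.2.2, (3 / 2) * p.2.2 ^ 2 / p.2.1 - R p.1 * p.2.1 ^ 3)

/-- `E₀ = λ_ε ∂_{λ_ε} + 2λ_εε ∂_{λ_εε}`. -/
def E0 (p : ℂ × ℂ × ℂ) : ℂ × ℂ × ℂ := (0, p.2.1, 2 * p.2.2)

/-- `E₁ = 2λ_ε ∂_{λ_εε}`. -/
def E1 (p : ℂ × ℂ × ℂ) : ℂ × ℂ × ℂ := (0, 0, 2 * p.2.1)

/-- The second prolongation `X⁽²⁾ = a ∂_λ + a'λ_ε ∂_{λ_ε} + (a''λ_ε² + a'λ_εε) ∂_{λ_εε}`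
of `X = a∂_λ`. -/
noncomputable def X2 (a : ℂ → ℂ) (p : ℂ × ℂ × ℂ) : ℂ × ℂ × ℂ :=
  (a p.1, deriv a p.1 * p.2.1,
    deriv (deriv a) p.1 * p.2.1 ^ 2 + deriv a p.1 * p.2.2)

open ContinuousLinearMap

theorem IsLinearMap.fderiv_apply {𝕜 E F : Type*} [NontriviallyNormedField 𝕜] [CompleteSpace 𝕜]
    [NormedAddCommGroup E] [NormedSpace 𝕜 E] [FiniteDimensional 𝕜 E]
    [NormedAddCommGroup F] [NormedSpace 𝕜 F] {f : E → F} (hf : IsLinearMap 𝕜 f) (x v : E) :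
    fderiv 𝕜 f x v = f v := by
  change fderiv 𝕜 (hf.mk' f).toContinuousLinearMap x v = _
  rw [ContinuousLinearMap.fderiv]
  rfl

theorem isLinearMap_E0 : IsLinearMap ℂ E0 :=
  ⟨fun p q => by simp [E0, mul_add], fun c p => by simp [E0, mul_left_comm]⟩

theorem isLinearMap_E1 : IsLinearMap ℂ E1 :=
  ⟨fun p q => by simp [E1, mul_add], fun c p => by simp [E1, mul_left_comm]⟩

theorem hasFDerivAt_comp_fst {𝕜 F : Type*} [NontriviallyNormedField 𝕜]
    [NormedAddCommGroup F] [NormedSpace 𝕜 F] {g : 𝕜 → 𝕜} {p : 𝕜 × F}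
    (hg : DifferentiableAt 𝕜 g p.1) :
    HasFDerivAt (fun q : 𝕜 × F => g q.1) (deriv g p.1 • fst 𝕜 𝕜 F) p :=
  hg.hasDerivAt.comp_hasFDerivAt p hasFDerivAt_fst

theorem fderiv_X2_apply {a : ℂ → ℂ} (ha : Differentiable ℂ a)
    (ha' : Differentiable ℂ (deriv a)) (ha'' : Differentiable ℂ (deriv (deriv a)))
    (p q : ℂ × ℂ × ℂ) :
    fderiv ℂ (X2 a) p q =
      (deriv a p.1 * q.1,
       deriv (deriv a) p.1 * q.1 * p.2.1 + deriv a p.1 * q.2.1,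
       deriv (deriv (deriv a)) p.1 * q.1 * p.2.1 ^ 2 + 2 * deriv (deriv a) p.1 * p.2.1 * q.2.1
         + deriv (deriv a) p.1 * q.1 * p.2.2 + deriv a p.1 * q.2.2) := by
  have hy : HasFDerivAt (fun q : ℂ × ℂ × ℂ => q.2.1) _ p := (hasFDerivAt_snd (𝕜 := ℂ)).fst
  have hz : HasFDerivAt (fun q : ℂ × ℂ × ℂ => q.2.2) _ p := (hasFDerivAt_snd (𝕜 := ℂ)).snd
  have H : HasFDerivAt (X2 a) _ p := (hasFDerivAt_comp_fst (ha p.1)).prodMk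
      (((hasFDerivAt_comp_fst (ha' p.1)).mul hy).prodMk
        (((hasFDerivAt_comp_fst (ha'' p.1)).mul (hy.pow 2)).add
          ((hasFDerivAt_comp_fst (ha' p.1)).mul hz)))
  rw [H.fderiv]
  simp only [Nat.add_one_sub_one, pow_one, nsmul_eq_mul, Nat.cast_ofNat, prod_apply, smul_apply,
    coe_fst', smul_eq_mul, add_apply, comp_apply, coe_snd', Prod.mk.injEq, true_and]
  exact ⟨by ring, by ring⟩

theorem fderiv_Em1_apply {R : ℂ → ℂ} (hR : Differentiable ℂ R) {p : ℂ × ℂ × ℂ} (hp : p.2.1 ≠ 0)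
    (q : ℂ × ℂ × ℂ) :
    fderiv ℂ (Em1 R) p q =
      (q.2.1, q.2.2,
        3 * p.2.2 * q.2.2 / p.2.1 - (3 / 2) * p.2.2 ^ 2 * q.2.1 / p.2.1 ^ 2
          - deriv R p.1 * q.1 * p.2.1 ^ 3 - 3 * R p.1 * p.2.1 ^ 2 * q.2.1) := by
  have hy : HasFDerivAt (fun q : ℂ × ℂ × ℂ => q.2.1) _ p := (hasFDerivAt_snd (𝕜 := ℂ)).fst
  have hz : HasFDerivAt (fun q : ℂ × ℂ × ℂ => q.2.2) _ p := (hasFDerivAt_snd (𝕜 := ℂ)).snd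
  have H : HasFDerivAt (Em1 R) _ p := hy.prodMk (hz.prodMk
    ((((hz.pow 2).const_mul ((3 : ℂ) / 2)).mul ((hasDerivAt_inv hp).comp_hasFDerivAt p hy)).sub
      ((hasFDerivAt_comp_fst (hR p.1)).mul (hy.pow 3))))
  rw [H.fderiv]
  simp only [Function.comp_apply, Nat.add_one_sub_one, pow_one, nsmul_eq_mul, Nat.cast_ofNat,
    prod_apply, comp_apply, coe_snd', coe_fst', sub_apply, add_apply, smul_apply, smul_eq_mul,
    Prod.mk.injEq, true_and]
  field_simp
  ring

theorem lieBracket_Em1_X2 {R a : ℂ → ℂ} (hR : Differentiable ℂ R) (ha : Differentiable ℂ a)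
    (ha' : Differentiable ℂ (deriv a)) (ha'' : Differentiable ℂ (deriv (deriv a)))
    {p : ℂ × ℂ × ℂ} (hp : p.2.1 ≠ 0) :
    VectorField.lieBracket ℂ (Em1 R) (X2 a) p
      = (0, 0, (deriv (deriv (deriv a)) p.1 + 2 * R p.1 * deriv a p.1
          + deriv R p.1 * a p.1) * p.2.1 ^ 3) := by
  rw [VectorField.lieBracket, fderiv_X2_apply ha ha' ha'', fderiv_Em1_apply hR hp]
  simp only [Em1, X2, Prod.mk_sub_mk, Prod.mk.injEq]
  refine ⟨by ring, by ring, ?_⟩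
  field_simp
  ring

theorem lieBracket_E0_X2 {a : ℂ → ℂ} (ha : Differentiable ℂ a)
    (ha' : Differentiable ℂ (deriv a)) (ha'' : Differentiable ℂ (deriv (deriv a)))
    (p : ℂ × ℂ × ℂ) :
    VectorField.lieBracket ℂ E0 (X2 a) p = 0 := by
  rw [VectorField.lieBracket, fderiv_X2_apply ha ha' ha'', isLinearMap_E0.fderiv_apply]
  simp only [E0, X2, Prod.mk_sub_mk, Prod.mk_eq_zero]
  exact ⟨by ring, by ring, by ring⟩

theorem lieBracket_E1_X2 {a : ℂ → ℂ} (ha : Differentiable ℂ a)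
    (ha' : Differentiable ℂ (deriv a)) (ha'' : Differentiable ℂ (deriv (deriv a)))
    (p : ℂ × ℂ × ℂ) :
    VectorField.lieBracket ℂ E1 (X2 a) p = 0 := by
  rw [VectorField.lieBracket, fderiv_X2_apply ha ha' ha'', isLinearMap_E1.fderiv_apply]
  simp only [E1, X2, Prod.mk_sub_mk, Prod.mk_eq_zero]
  exact ⟨by ring, by ring, by ring⟩

theorem prolongation_commutes_with_parallel_fields_general (R a : ℂ → ℂ)
    (hR : Differentiable ℂ R)
    (ha : Differentiable ℂ a) (ha' : Differentiable ℂ (deriv a))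
    (ha'' : Differentiable ℂ (deriv (deriv a))) :
    (∀ p : ℂ × ℂ × ℂ, p.2.1 ≠ 0 →
      VectorField.lieBracket ℂ (Em1 R) (X2 a) p
        = (0, 0, (deriv (deriv (deriv a)) p.1 + 2 * R p.1 * deriv a p.1
            + deriv R p.1 * a p.1) * p.2.1 ^ 3)) ∧
    (∀ p : ℂ × ℂ × ℂ, p.2.1 ≠ 0 → VectorField.lieBracket ℂ E0 (X2 a) p = 0) ∧
    (∀ p : ℂ × ℂ × ℂ, p.2.1 ≠ 0 → VectorField.lieBracket ℂ E1 (X2 a) p = 0) ∧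
    ((∀ p : ℂ × ℂ × ℂ, p.2.1 ≠ 0 →
        VectorField.lieBracket ℂ (Em1 R) (X2 a) p = 0 ∧
        VectorField.lieBracket ℂ E0 (X2 a) p = 0 ∧
        VectorField.lieBracket ℂ E1 (X2 a) p = 0) ↔
      ∀ l : ℂ, deriv (deriv (deriv a)) l + 2 * R l * deriv a l + deriv R l * a l = 0) := by
  have hEm1 (p : ℂ × ℂ × ℂ) (hp : p.2.1 ≠ 0) := lieBracket_Em1_X2 hR ha ha' ha'' hp
  have hE0 (p : ℂ × ℂ × ℂ) := lieBracket_E0_X2 ha ha' ha'' p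
  have hE1 (p : ℂ × ℂ × ℂ) := lieBracket_E1_X2 ha ha' ha'' p
  refine ⟨hEm1, fun p _ => hE0 p, fun p _ => hE1 p, fun h l => ?_, fun h p hp => ⟨?_, hE0 p, hE1 p⟩⟩
  · have hl := (h (l, 1, 0) one_ne_zero).1
    rw [hEm1 (l, 1, 0) one_ne_zero] at hl
    simpa using congrArg (fun v : ℂ × ℂ × ℂ => v.2.2) hl
  · rw [hEm1 p hp, h p.1, zero_mul]
    rfl

/-- `[E₋₁, X⁽²⁾] = (a''' + 2R a' + R' a)·λ_ε³ ∂_{λ_εε}`, `[E₀, X⁽²⁾] = [E₁, X⁽²⁾] = 0`;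
in particular `X⁽²⁾` commutes with `E₋₁, E₀, E₁` iff `a''' + 2R a' + R' a = 0`. -/
theorem prolongation_commutes_with_parallel_fields (R a : ℂ → ℂ)
    (hR : Differentiable ℂ R) (hR' : Differentiable ℂ (deriv R))
    (ha : Differentiable ℂ a) (ha' : Differentiable ℂ (deriv a))
    (ha'' : Differentiable ℂ (deriv (deriv a))) :
    (∀ p : ℂ × ℂ × ℂ, p.2.1 ≠ 0 →
      VectorField.lieBracket ℂ (Em1 R) (X2 a) p
        = (0, 0, (deriv (deriv (deriv a)) p.1 + 2 * R p.1 * deriv a p.1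
            + deriv R p.1 * a p.1) * p.2.1 ^ 3)) ∧
    (∀ p : ℂ × ℂ × ℂ, p.2.1 ≠ 0 → VectorField.lieBracket ℂ E0 (X2 a) p = 0) ∧
    (∀ p : ℂ × ℂ × ℂ, p.2.1 ≠ 0 → VectorField.lieBracket ℂ E1 (X2 a) p = 0) ∧
    ((∀ p : ℂ × ℂ × ℂ, p.2.1 ≠ 0 →
        VectorField.lieBracket ℂ (Em1 R) (X2 a) p = 0 ∧
        VectorField.lieBracket ℂ E0 (X2 a) p = 0 ∧
        VectorField.lieBracket ℂ E1 (X2 a) p = 0) ↔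
      ∀ l : ℂ, deriv (deriv (deriv a)) l + 2 * R l * deriv a l + deriv R l * a l = 0) :=
  prolongation_commutes_with_parallel_fields_general R a hR ha ha' ha''
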